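/- Let G be a graph with μ₂(A) > 0 and let g be the multiplicity of μₙ(A). Then χ(G) ≥ 1 + min{g, |μₙ(A)|/μ₂(A)}. -/

import Mathlib

open Matrix BigOperators

local notation "⟪" x ", " y "⟫" => @inner ℝ _ _ x y

instance instCoeFunEuclid {m : ℕ} : Coe (Fin m → ℝ) (EuclideanSpace ℝ (Fin m)) := ⟨WithLp.toLp 2⟩

section Toolkit
variable {m : ℕ} {B : Matrix (Fin m) (Fin m) ℝ}

lemma inner_eq_dot (x y : EuclideanSpace ℝ (Fin m)) :
    ⟪x, y⟫ = (x : Fin m → ℝ) ⬝ᵥ (y : Fin m → ℝ) := by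
  simp [PiLp.inner_apply, dotProduct, mul_comm]

noncomputable def coef (hB : B.IsHermitian) (x : EuclideanSpace ℝ (Fin m)) (i : Fin m) : ℝ :=
  ⟪(hB.eigenvectorBasis i : EuclideanSpace ℝ (Fin m)), x⟫

lemma symm_dot (hB : B.IsHermitian) (w x : Fin m → ℝ) :
    w ⬝ᵥ (B *ᵥ x) = (B *ᵥ w) ⬝ᵥ x := by
  have hBt : Bᵀ = B := by simpa using hB.eq
  rw [dotProduct_mulVec, ← hBt, vecMul_transpose, hBt]

lemma quadform_eq (hB : B.IsHermitian) (x : EuclideanSpace ℝ (Fin m)) :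
    ⟪x, ((B *ᵥ x : Fin m → ℝ) : EuclideanSpace ℝ (Fin m))⟫
      = ∑ i, hB.eigenvalues i * (coef hB x i)^2 := by
  classical
  rw [← hB.eigenvectorBasis.sum_inner_mul_inner x ((B *ᵥ x : Fin m → ℝ) : EuclideanSpace ℝ (Fin m))]
  apply Finset.sum_congr rfl
  intro i _
  have h1 : ⟪(hB.eigenvectorBasis i : EuclideanSpace ℝ (Fin m)), ((B *ᵥ x : Fin m → ℝ) : EuclideanSpace ℝ (Fin m))⟫
      = hB.eigenvalues i * coef hB x i := by
    rw [inner_eq_dot]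
    rw [show ((hB.eigenvectorBasis i : EuclideanSpace ℝ (Fin m)) : Fin m → ℝ) ⬝ᵥ (B *ᵥ x) = _ from symm_dot hB _ _]
    erw [hB.mulVec_eigenvectorBasis]
    rw [smul_dotProduct]
    rw [coef, inner_eq_dot]
    rfl
  rw [h1, coef, real_inner_comm]
  ring

lemma parseval (hB : B.IsHermitian) (x : EuclideanSpace ℝ (Fin m)) :
    ⟪x, x⟫ = ∑ i, (coef hB x i)^2 := by
  have := hB.eigenvectorBasis.sum_inner_mul_inner x x
  simp only [← this]
  refine Finset.sum_congr rfl fun i _ => ?_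
  rw [coef, real_inner_comm]; ring

lemma rayleigh_upper_deflated (hB : B.IsHermitian) (x : EuclideanSpace ℝ (Fin m))
    (i₀ : Fin m) (hc : coef hB x i₀ = 0) {c : ℝ} (h : ∀ i, i ≠ i₀ → hB.eigenvalues i ≤ c) :
    ⟪x, ((B *ᵥ x : Fin m → ℝ) : EuclideanSpace ℝ (Fin m))⟫ ≤ c * ⟪x, x⟫ := by
  rw [quadform_eq hB x, parseval hB x, Finset.mul_sum]
  apply Finset.sum_le_sum
  intro i _
  by_cases hi : i = i₀
  · subst hi; simp [hc]
  · have := h i hi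
    nlinarith [sq_nonneg (coef hB x i)]

lemma exists_eigen_le (hB : B.IsHermitian) (x : EuclideanSpace ℝ (Fin m))
    (hx : ⟪x, x⟫ = 1) :
    ∃ i, hB.eigenvalues i ≤ ⟪x, ((B *ᵥ x : Fin m → ℝ) : EuclideanSpace ℝ (Fin m))⟫ := by
  by_contra hcon
  push_neg at hcon
  set Q := ⟪x, ((B *ᵥ x : Fin m → ℝ) : EuclideanSpace ℝ (Fin m))⟫ with hQ
  have h1 : Q = ∑ i, hB.eigenvalues i * (coef hB x i)^2 := quadform_eq hB x
  have h2 : (1:ℝ) = ∑ i, (coef hB x i)^2 := by rw [← hx]; exact parseval hB x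
  have hex : ∃ j, (coef hB x j)^2 > 0 := by
    by_contra hc
    push_neg at hc
    have : ∑ i, (coef hB x i)^2 ≤ 0 := Finset.sum_nonpos (fun i _ => hc i)
    linarith
  obtain ⟨j, hj⟩ := hex
  have hlt : ∑ i, hB.eigenvalues i * (coef hB x i)^2 > ∑ i, Q * (coef hB x i)^2 := by
    apply Finset.sum_lt_sum
    · intro i _
      nlinarith [sq_nonneg (coef hB x i), hcon i]
    · exact ⟨j, Finset.mem_univ j, by nlinarith [hcon j]⟩
  have : ∑ i, Q * (coef hB x i)^2 = Q := by rw [← Finset.mul_sum, ← h2, mul_one]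
  linarith [h1 ▸ hlt, this]

lemma eigenvalue_le_of_quadform (hB : B.IsHermitian) {c : ℝ}
    (h : ∀ x : EuclideanSpace ℝ (Fin m),
      ⟪x, ((B *ᵥ x : Fin m → ℝ) : EuclideanSpace ℝ (Fin m))⟫ ≤ c * ⟪x, x⟫) (i : Fin m) :
    hB.eigenvalues i ≤ c := by
  have h1 := h (hB.eigenvectorBasis i)
  have h2 : ⟪(hB.eigenvectorBasis i : EuclideanSpace ℝ (Fin m)), (hB.eigenvectorBasis i : EuclideanSpace ℝ (Fin m))⟫ = 1 := by
    have := hB.eigenvectorBasis.orthonormal.1 i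
    rw [real_inner_self_eq_norm_sq, this]; norm_num
  have h4 : ((hB.eigenvectorBasis i : EuclideanSpace ℝ (Fin m)) : Fin m → ℝ) ⬝ᵥ ((hB.eigenvectorBasis i : EuclideanSpace ℝ (Fin m)) : Fin m → ℝ) = 1 := by
    rw [← inner_eq_dot]; exact h2
  have h3 : ⟪(hB.eigenvectorBasis i : EuclideanSpace ℝ (Fin m)),
      ((B *ᵥ (hB.eigenvectorBasis i) : Fin m → ℝ) : EuclideanSpace ℝ (Fin m))⟫ = hB.eigenvalues i := by
    rw [inner_eq_dot]
    erw [hB.mulVec_eigenvectorBasis]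
    erw [dotProduct_smul, smul_eq_mul, h4, mul_one]
  rw [h3, h2] at h1
  linarith [h1]

lemma trace_eq_sum_eig (hB : B.IsHermitian) : B.trace = ∑ i, hB.eigenvalues i := by
  have hst := hB.spectral_theorem
  have h1 : B.trace = (Matrix.diagonal (RCLike.ofReal ∘ hB.eigenvalues) : Matrix (Fin m) (Fin m) ℝ).trace := by
    rw [hB.trace_eq_sum_eigenvalues, Matrix.trace_diagonal]
    simp
  rw [h1, Matrix.trace_diagonal]
  simp
end Toolkit

section Helpers
variable {p : ℕ} {ι : Type*}

lemma sum_dot (s : Finset ι) (f : ι → (Fin p → ℝ)) (w : Fin p → ℝ) :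
    (∑ c ∈ s, f c) ⬝ᵥ w = ∑ c ∈ s, (f c ⬝ᵥ w) := by
  simp only [dotProduct, Finset.sum_apply, Finset.sum_mul]
  exact Finset.sum_comm

lemma dot_sum (s : Finset ι) (w : Fin p → ℝ) (f : ι → (Fin p → ℝ)) :
    w ⬝ᵥ (∑ c ∈ s, f c) = ∑ c ∈ s, (w ⬝ᵥ f c) := by
  simp only [dotProduct, Finset.sum_apply, Finset.mul_sum]
  exact Finset.sum_comm

lemma mulVec_sumv {q : ℕ} (B : Matrix (Fin q) (Fin p) ℝ) (s : Finset ι) (f : ι → (Fin p → ℝ)) :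
    B *ᵥ (∑ c ∈ s, f c) = ∑ c ∈ s, B *ᵥ (f c) := by
  funext i
  simp only [Matrix.mulVec, dot_sum, Finset.sum_apply]
end Helpers

set_option maxHeartbeats 2000000 in
/-- second bound, classical: for a graph with `μ₂ > 0`, where `g` is the
multiplicity of the smallest eigenvalue `μₙ`,
`χ(G) ≥ 1 + min { g, |μₙ| / μ₂ }` (classical version). -/
theorem stmt11 {n : ℕ} (hn : 2 ≤ n) (G : SimpleGraph (Fin n)) [DecidableRel G.Adj]
    (hA : (G.adjMatrix ℝ).IsHermitian)
    (μ : Fin n → ℝ) (σ : Equiv.Perm (Fin n))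
    (hμ : μ = hA.eigenvalues ∘ σ) (hμanti : Antitone μ)
    (hμ2 : 0 < μ ⟨1, by omega⟩)
    (g : ℕ)
    (hg : g = (Finset.univ.filter (fun i : Fin n => μ i = μ ⟨n - 1, by omega⟩)).card) :
    1 + min (g : ℝ) (|μ ⟨n - 1, by omega⟩| / μ ⟨1, by omega⟩)
      ≤ (G.chromaticNumber.toNat : ℝ) := by
  classical
  set A := G.adjMatrix ℝ with hAdef
  have h0n : 0 < n := by omega
  have h1n : 1 < n := by omega
  set i0 : Fin n := ⟨0, h0n⟩ with hi0
  set i1 : Fin n := ⟨1, h1n⟩ with hi1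
  set iN : Fin n := ⟨n - 1, by omega⟩ with hiN
  have hμeq : ∀ j : Fin n, μ j = hA.eigenvalues (σ j) := fun j => by rw [hμ]; rfl
  -- the smallest eigenvalue is negative
  have hμN : μ iN < 0 := by
    by_contra hcon
    push_neg at hcon
    have hjN : ∀ j : Fin n, j ≤ iN := fun j => by
      rw [Fin.le_def]
      have := j.isLt
      simp only [hiN]
      omega
    have hall : ∀ j : Fin n, 0 ≤ μ j := fun j => le_trans hcon (hμanti (hjN j))
    have hsum : ∑ j, μ j = 0 := by
      have h1 : ∑ j, hA.eigenvalues (σ j) = ∑ i, hA.eigenvalues i := Equiv.sum_comp σ _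
      have h2 : A.trace = 0 := by simp [hAdef]
      calc ∑ j, μ j = ∑ j, hA.eigenvalues (σ j) := by simp [hμeq]
        _ = ∑ i, hA.eigenvalues i := h1
        _ = A.trace := (trace_eq_sum_eig hA).symm
        _ = 0 := h2
    have hle : μ i1 ≤ ∑ j, μ j :=
      Finset.single_le_sum (fun j _ => hall j) (Finset.mem_univ i1)
    rw [hsum] at hle
    exact absurd hμ2 (not_lt.mpr hle)
  -- coloring setup
  have hcol : G.Colorable (G.chromaticNumber.toNat) := G.colorable_chromaticNumber_of_fintype
  set k := G.chromaticNumber.toNat with hk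
  obtain ⟨C⟩ := hcol
  have hk1 : 0 < k := Fin.pos_iff_nonempty.mpr ⟨C i0⟩
  rcases lt_or_ge (g : ℕ) k with hgk | hkg
  · -- easy case : g < k
    have h1 : (g : ℝ) + 1 ≤ k := by exact_mod_cast hgk
    have h2 : min (g : ℝ) (|μ iN| / μ i1) ≤ g := min_le_left _ _
    have : (1 : ℝ) + min (g : ℝ) (|μ iN| / μ i1) ≤ k := by linarith
    exact this
  -- main case : k ≤ g
  set v : Fin n → (Fin n → ℝ) := fun i => (hA.eigenvectorBasis i : Fin n → ℝ) with hvdef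
  set vtop : Fin n → ℝ := v (σ i0) with hvtopdef
  set c₀ : Fin k := ⟨0, hk1⟩ with hc₀
  have hcardJ : Fintype.card {j : Fin n // μ j = μ iN} = g := by
    rw [hg]; exact Fintype.card_subtype _
  have hcardK' : Fintype.card {c : Fin k // c ≠ c₀} = k - 1 := by
    have h := Fintype.card_subtype_compl (fun c : Fin k => c = c₀)
    rw [Fintype.card_subtype_eq, Fintype.card_fin] at h
    exact h
  set Bm : Matrix {c : Fin k // c ≠ c₀} {j : Fin n // μ j = μ iN} ℝ :=
    Matrix.of (fun c j => ∑ i, (if C i = c.1 then v (σ j.1) i * vtop i else 0)) with hBm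
  have hnotinj : ¬ Function.Injective (Matrix.mulVecLin Bm) := by
    intro hinj
    have hle := LinearMap.finrank_le_finrank_of_injective hinj
    rw [Module.finrank_fintype_fun_eq_card, Module.finrank_fintype_fun_eq_card,
      hcardJ, hcardK'] at hle
    omega
  obtain ⟨t₁, t₂, hteq, htne⟩ := Function.not_injective_iff.mp hnotinj
  set t : {j : Fin n // μ j = μ iN} → ℝ := t₁ - t₂ with htdef
  have ht0 : t ≠ 0 := sub_ne_zero.mpr htne
  have htker : Bm *ᵥ t = 0 := by
    have : Bm *ᵥ t = Bm.mulVecLin t₁ - Bm.mulVecLin t₂ := by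
      rw [show Bm *ᵥ t = Bm.mulVecLin (t₁ - t₂) from rfl, map_sub]
    rw [this, hteq, sub_self]
  obtain ⟨j₀, hj₀⟩ : ∃ j, t j ≠ 0 := Function.ne_iff.mp ht0
  set z0 : Fin n → ℝ := ∑ j : {j : Fin n // μ j = μ iN}, t j • v (σ j.1) with hz0def
  have hvdot : ∀ a b : Fin n, v a ⬝ᵥ v b = if a = b then 1 else 0 := by
    intro a b
    have horth := hA.eigenvectorBasis.orthonormal
    rw [orthonormal_iff_ite] at horth
    have h := horth a b
    rw [inner_eq_dot] at h
    simpa using h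
  have hz0dot : ∀ w : Fin n → ℝ, w ⬝ᵥ z0 = ∑ j : {j : Fin n // μ j = μ iN}, t j * (w ⬝ᵥ v (σ j.1)) := by
    intro w
    rw [hz0def, dot_sum]
    exact Finset.sum_congr rfl fun j _ => by rw [dotProduct_smul]; rfl
  have hvz0j : ∀ j : {j : Fin n // μ j = μ iN}, v (σ j.1) ⬝ᵥ z0 = t j := by
    intro j
    rw [hz0dot]
    rw [Finset.sum_eq_single j]
    · rw [hvdot]; simp
    · intro j' _ hne
      rw [hvdot, if_neg, mul_zero]
      intro heq
      exact hne (Subtype.ext (σ.injective heq)).symm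
    · intro h; exact absurd (Finset.mem_univ j) h
  have hμi0 : 0 < μ i0 := lt_of_lt_of_le hμ2 (hμanti (show i0 ≤ i1 from by simp [hi0, hi1, Fin.mk_le_mk]))
  have hvz0top : vtop ⬝ᵥ z0 = 0 := by
    rw [hz0dot]
    apply Finset.sum_eq_zero
    intro j _
    rw [hvtopdef, hvdot, if_neg, mul_zero]
    intro heq
    have hji : i0 = j.1 := σ.injective heq
    have hmu : μ i0 = μ iN := by rw [hji]; exact j.2
    linarith [hμN, hμi0]
  have hcoef : ∀ (x : Fin n → ℝ) (i : Fin n),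
      coef hA (x : EuclideanSpace ℝ (Fin n)) i = v i ⬝ᵥ x := by
    intro x i
    rw [coef, inner_eq_dot]
  have hqpos : 0 < z0 ⬝ᵥ z0 := by
    have hp := parseval hA (z0 : EuclideanSpace ℝ (Fin n))
    rw [inner_eq_dot] at hp
    have h1 : coef hA (z0 : EuclideanSpace ℝ (Fin n)) (σ j₀.1) = t j₀ := by
      rw [hcoef]; exact hvz0j j₀
    have h2 := Finset.single_le_sum
      (f := fun i => (coef hA (z0 : EuclideanSpace ℝ (Fin n)) i)^2)
      (fun i _ => sq_nonneg _) (Finset.mem_univ (σ j₀.1))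
    have h3 : 0 < (t j₀)^2 := by positivity
    have h2' : (t j₀)^2 ≤ ∑ i, (coef hA (z0 : EuclideanSpace ℝ (Fin n)) i)^2 := by
      simpa [h1] using h2
    calc (0:ℝ) < (t j₀)^2 := h3
      _ ≤ ∑ i, (coef hA (z0 : EuclideanSpace ℝ (Fin n)) i)^2 := h2'
      _ = z0 ⬝ᵥ z0 := hp.symm
  set q : ℝ := z0 ⬝ᵥ z0 with hqdef
  have hsq : Real.sqrt q ≠ 0 := ne_of_gt (Real.sqrt_pos.mpr hqpos)
  set sfac : ℝ := (Real.sqrt q)⁻¹ with hsfac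
  set z : Fin n → ℝ := sfac • z0 with hzdef
  have hzz : z ⬝ᵥ z = 1 := by
    have h5 : Real.sqrt q * Real.sqrt q = q := Real.mul_self_sqrt (le_of_lt hqpos)
    rw [hzdef, smul_dotProduct, dotProduct_smul, smul_eq_mul, smul_eq_mul, ← hqdef, hsfac]
    field_simp
    rw [Real.sq_sqrt (le_of_lt hqpos)]
  have hAv : ∀ i : Fin n, A *ᵥ v i = hA.eigenvalues i • v i := by
    intro i
    exact hA.mulVec_eigenvectorBasis i
  have hAz0 : A *ᵥ z0 = μ iN • z0 := by
    rw [hz0def, mulVec_sumv, Finset.smul_sum]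
    apply Finset.sum_congr rfl
    intro j _
    rw [mulVec_smul, hAv, smul_smul, smul_smul]
    congr 1
    rw [mul_comm]
    congr 1
    rw [← hμeq j.1, j.2]
  have hAz : A *ᵥ z = μ iN • z := by
    rw [hzdef, mulVec_smul, hAz0, smul_comm]
  have hzAz : z ⬝ᵥ (A *ᵥ z) = μ iN := by
    rw [hAz, dotProduct_smul, smul_eq_mul, hzz, mul_one]
  have hztop : vtop ⬝ᵥ z = 0 := by
    rw [hzdef, dotProduct_smul, hvz0top, smul_zero]
  clear_value z0 q sfac z v vtop Bm t
  set zc : Fin k → (Fin n → ℝ) := fun c => fun i => if C i = c then z i else 0 with hzcdef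
  have hzci : ∀ c i, zc c i = if C i = c then z i else 0 := fun c i => rfl
  clear_value zc
  clear hzcdef
  have hsum_zc : ∑ c, zc c = z := by
    funext i
    rw [Finset.sum_apply]
    simp only [hzci]
    rw [Finset.sum_ite_eq]
    simp
  have hzc_adj : ∀ c, zc c ⬝ᵥ (A *ᵥ zc c) = 0 := by
    intro c
    apply Finset.sum_eq_zero
    intro i _
    by_cases hci : C i = c
    · have hz2 : (A *ᵥ zc c) i = 0 := by
        simp only [Matrix.mulVec, dotProduct]
        apply Finset.sum_eq_zero
        intro jj _
        by_cases hcj : C jj = c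
        · have hnadj : ¬ G.Adj i jj := fun hadj => C.valid hadj (hci.trans hcj.symm)
          simp [hAdef, SimpleGraph.adjMatrix_apply, hnadj]
        · simp [hzci, hcj]
      rw [hz2, mul_zero]
    · rw [hzci, if_neg hci, zero_mul]
  have hzc_orth : ∀ c d, c ≠ d → zc c ⬝ᵥ zc d = 0 := by
    intro c d hcd
    apply Finset.sum_eq_zero
    intro i _
    by_cases hci : C i = c
    · have hne : C i ≠ d := by rw [hci]; exact hcd
      rw [hzci c i, hzci d i, if_neg hne, mul_zero]
    · rw [hzci c i, if_neg hci, zero_mul]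
  have hzctop' : ∀ (c : Fin k), c ≠ c₀ → zc c ⬝ᵥ vtop = 0 := by
    intro c hc
    have h1 : zc c ⬝ᵥ vtop = (fun i => if C i = c then vtop i else 0) ⬝ᵥ z := by
      refine Finset.sum_congr rfl fun i _ => ?_
      rw [hzci c i]
      by_cases hci : C i = c
      · simp only [if_pos hci]; ring
      · simp only [if_neg hci, zero_mul, mul_zero]
    have h2 : ∀ j : {j : Fin n // μ j = μ iN},
        Bm ⟨c, hc⟩ j = (fun i => if C i = c then vtop i else 0) ⬝ᵥ v (σ j.1) := by
      intro j
      rw [hBm]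
      simp only [Matrix.of_apply]
      refine Finset.sum_congr rfl fun i _ => ?_
      by_cases hci : C i = c
      · simp only [if_pos hci]; ring
      · simp only [if_neg hci, zero_mul]
    have h4 : zc c ⬝ᵥ vtop = sfac * ((fun i => if C i = c then vtop i else 0) ⬝ᵥ z0) := by
      rw [h1, hzdef, dotProduct_smul, smul_eq_mul]
    rw [h4, hz0dot]
    have h3 : ∑ j : {j : Fin n // μ j = μ iN},
        t j * ((fun i => if C i = c then vtop i else 0) ⬝ᵥ v (σ j.1)) = (Bm *ᵥ t) ⟨c, hc⟩ := by
      simp only [Matrix.mulVec, dotProduct]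
      refine Finset.sum_congr rfl fun j _ => by rw [h2 j, mul_comm]; rfl
    rw [h3, htker]
    simp
  have hzctop : ∀ c, zc c ⬝ᵥ vtop = 0 := by
    intro c
    by_cases hc : c = c₀
    · subst hc
      have hsplit : ∑ c, zc c ⬝ᵥ vtop = 0 := by
        rw [← sum_dot, hsum_zc, dotProduct_comm]
        exact hztop
      have hadd := Finset.add_sum_erase Finset.univ (fun c => zc c ⬝ᵥ vtop) (Finset.mem_univ c₀)
      have hrest : ∑ c ∈ Finset.univ.erase c₀, zc c ⬝ᵥ vtop = 0 :=
        Finset.sum_eq_zero fun c hcmem => hzctop' c (Finset.ne_of_mem_erase hcmem)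
      rw [hrest, hsplit, add_zero] at hadd
      exact hadd
    · exact hzctop' c hc
  set qc : Fin k → ℝ := fun c => zc c ⬝ᵥ zc c with hqcdef
  have hqci : ∀ c, qc c = zc c ⬝ᵥ zc c := fun c => rfl
  clear_value qc
  clear hqcdef
  have hqcnn : ∀ c, 0 ≤ qc c := fun c => by
    rw [hqci]; exact Finset.sum_nonneg fun i _ => mul_self_nonneg _
  have hqc_zero : ∀ c, qc c = 0 → zc c = 0 := by
    intro c h
    funext i
    rw [hqci] at h
    have := (Finset.sum_eq_zero_iff_of_nonneg
      (fun i _ => mul_self_nonneg (zc c i))).mp h i (Finset.mem_univ i)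
    exact mul_self_eq_zero.mp this
  have hqcsum : ∑ c, qc c = 1 := by
    have h1 : ∀ c, qc c = ∑ i, zc c i * z i := by
      intro c
      rw [hqci]
      refine Finset.sum_congr rfl fun i _ => ?_
      rw [hzci c i]
      by_cases hci : C i = c
      · simp only [if_pos hci]
      · simp only [if_neg hci, zero_mul]
    calc ∑ c, qc c = ∑ c, ∑ i, zc c i * z i := Finset.sum_congr rfl fun c _ => h1 c
      _ = ∑ i, ∑ c, zc c i * z i := Finset.sum_comm
      _ = ∑ i, z i * z i := by
          refine Finset.sum_congr rfl fun i _ => ?_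
          rw [← Finset.sum_mul]
          congr 1
          have h2 := congrFun hsum_zc i
          rw [Finset.sum_apply] at h2
          exact h2
      _ = 1 := hzz
  set uc : Fin k → (Fin n → ℝ) :=
    fun c => if qc c = 0 then 0 else (Real.sqrt (qc c))⁻¹ • zc c with hucdef
  have huci : ∀ c, uc c = if qc c = 0 then 0 else (Real.sqrt (qc c))⁻¹ • zc c := fun c => rfl
  clear_value uc
  clear hucdef
  have huc_scal : ∀ c, ∃ r : ℝ, uc c = r • zc c := by
    intro c
    by_cases h : qc c = 0
    · exact ⟨0, by rw [huci, if_pos h, zero_smul]⟩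
    · exact ⟨_, by rw [huci, if_neg h]⟩
  have hucz : ∀ c, Real.sqrt (qc c) • uc c = zc c := by
    intro c
    by_cases h : qc c = 0
    · rw [huci, if_pos h, smul_zero, hqc_zero c h]
    · rw [huci, if_neg h, smul_smul, mul_inv_cancel₀, one_smul]
      exact Real.sqrt_ne_zero'.mpr (lt_of_le_of_ne (hqcnn c) (Ne.symm h))
  have hucnn : ∀ c, 0 ≤ uc c ⬝ᵥ uc c := fun c =>
    Finset.sum_nonneg fun i _ => mul_self_nonneg _
  have hucuc : ∀ c, uc c ⬝ᵥ uc c ≤ 1 := by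
    intro c
    by_cases h : qc c = 0
    · rw [huci, if_pos h]
      simp
    · have hpos : 0 < qc c := lt_of_le_of_ne (hqcnn c) (Ne.symm h)
      rw [huci, if_neg h, smul_dotProduct, dotProduct_smul, smul_eq_mul, smul_eq_mul, ← hqci]
      have heq : (Real.sqrt (qc c))⁻¹ * ((Real.sqrt (qc c))⁻¹ * qc c) = 1 := by
        rw [← mul_assoc, ← mul_inv, Real.mul_self_sqrt hpos.le]
        exact inv_mul_cancel₀ h
      rw [heq]
  have huc_orth : ∀ c d, c ≠ d → uc c ⬝ᵥ uc d = 0 := by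
    intro c d hcd
    obtain ⟨r, hr⟩ := huc_scal c
    obtain ⟨r', hr'⟩ := huc_scal d
    rw [hr, hr', smul_dotProduct, dotProduct_smul, hzc_orth c d hcd, smul_zero, smul_zero]
  have huctop : ∀ c, uc c ⬝ᵥ vtop = 0 := fun c => by
    obtain ⟨r, hr⟩ := huc_scal c
    rw [hr, smul_dotProduct, hzctop c, smul_zero]
  have hucadj : ∀ c, uc c ⬝ᵥ (A *ᵥ uc c) = 0 := fun c => by
    obtain ⟨r, hr⟩ := huc_scal c
    rw [hr, smul_dotProduct, mulVec_smul, dotProduct_smul, hzc_adj c, smul_zero, smul_zero]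
  set N : Matrix (Fin k) (Fin k) ℝ := Matrix.of (fun c d => uc c ⬝ᵥ (A *ᵥ uc d)) with hNdef
  have hNi : ∀ c d, N c d = uc c ⬝ᵥ (A *ᵥ uc d) := fun c d => rfl
  clear_value N
  clear hNdef
  have hNsym : N.IsHermitian := by
    rw [Matrix.IsHermitian]
    ext c d
    rw [Matrix.conjTranspose_apply, hNi, hNi, star_trivial, symm_dot hA, dotProduct_comm]
  have hAsum : ∀ x : Fin k → ℝ, A *ᵥ (∑ c, x c • uc c) = ∑ c, x c • (A *ᵥ uc c) := by
    intro x
    rw [mulVec_sumv]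
    exact Finset.sum_congr rfl fun c _ => mulVec_smul A (x c) (uc c)
  have hyexp : ∀ x : Fin k → ℝ,
      (∑ c, x c • uc c) ⬝ᵥ (A *ᵥ (∑ c, x c • uc c)) = x ⬝ᵥ (N *ᵥ x) := by
    intro x
    rw [hAsum, sum_dot]
    have hL : ∀ c, (x c • uc c) ⬝ᵥ (∑ d, x d • (A *ᵥ uc d))
        = x c * ∑ d, x d * N c d := by
      intro c
      rw [smul_dotProduct, dot_sum, smul_eq_mul]
      congr 1
      refine Finset.sum_congr rfl fun d _ => ?_
      rw [dotProduct_smul, smul_eq_mul, hNi]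
    rw [Finset.sum_congr rfl fun c _ => hL c]
    simp only [Matrix.mulVec, dotProduct]
    refine Finset.sum_congr rfl fun c _ => ?_
    rw [Finset.mul_sum, Finset.mul_sum]
    exact Finset.sum_congr rfl fun d _ => by ring
  have hyy : ∀ x : Fin k → ℝ, (∑ c, x c • uc c) ⬝ᵥ (∑ c, x c • uc c) ≤ x ⬝ᵥ x := by
    intro x
    rw [sum_dot]
    have hterm : ∀ c, (x c • uc c) ⬝ᵥ (∑ d, x d • uc d) = x c * (x c * (uc c ⬝ᵥ uc c)) := by
      intro c
      rw [smul_dotProduct, dot_sum, smul_eq_mul]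
      congr 1
      rw [Finset.sum_eq_single c]
      · rw [dotProduct_smul, smul_eq_mul]
      · intro d _ hd
        rw [dotProduct_smul, huc_orth c d (Ne.symm hd), smul_zero]
      · intro h; exact absurd (Finset.mem_univ c) h
    rw [Finset.sum_congr rfl fun c _ => hterm c]
    apply Finset.sum_le_sum
    intro c _
    have h1 := hucuc c
    have h2 := hucnn c
    nlinarith [mul_self_nonneg (x c)]
  have hytop : ∀ x : Fin k → ℝ, vtop ⬝ᵥ (∑ c, x c • uc c) = 0 := by
    intro x
    rw [dot_sum]
    apply Finset.sum_eq_zero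
    intro c _
    rw [dotProduct_smul, dotProduct_comm, huctop c, smul_zero]
  have heigle : ∀ i : Fin n, i ≠ σ i0 → hA.eigenvalues i ≤ μ i1 := by
    intro i hi
    have h1 : hA.eigenvalues i = μ (σ.symm i) := by
      rw [hμeq (σ.symm i), Equiv.apply_symm_apply]
    rw [h1]
    apply hμanti
    have h2 : σ.symm i ≠ i0 := by
      intro h
      exact hi (by rw [← h, Equiv.apply_symm_apply])
    have h3 : (σ.symm i).1 ≠ 0 := by
      intro h0
      exact h2 (Fin.ext (by simpa [hi0] using h0))
    rw [Fin.le_def]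
    simp only [hi1]
    omega
  have hNquad : ∀ x : EuclideanSpace ℝ (Fin k),
      ⟪x, ((N *ᵥ x : Fin k → ℝ) : EuclideanSpace ℝ (Fin k))⟫ ≤ μ i1 * ⟪x, x⟫ := by
    intro x
    rw [inner_eq_dot, inner_eq_dot]
    have hy1 : (∑ c, x c • uc c) ⬝ᵥ (A *ᵥ (∑ c, x c • uc c)) = (x : Fin k → ℝ) ⬝ᵥ (N *ᵥ x) :=
      hyexp x
    have hcy : coef hA ((∑ c, x c • uc c : Fin n → ℝ) : EuclideanSpace ℝ (Fin n)) (σ i0) = 0 := by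
      rw [hcoef, ← hvtopdef]
      exact hytop x
    have hy2 := rayleigh_upper_deflated hA
      ((∑ c, x c • uc c : Fin n → ℝ) : EuclideanSpace ℝ (Fin n)) (σ i0) hcy heigle
    rw [inner_eq_dot, inner_eq_dot] at hy2
    calc (x : Fin k → ℝ) ⬝ᵥ (N *ᵥ x) = (∑ c, x c • uc c) ⬝ᵥ (A *ᵥ (∑ c, x c • uc c)) := hy1.symm
      _ ≤ μ i1 * ((∑ c, x c • uc c) ⬝ᵥ (∑ c, x c • uc c)) := hy2
      _ ≤ μ i1 * ((x : Fin k → ℝ) ⬝ᵥ (x : Fin k → ℝ)) :=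
          mul_le_mul_of_nonneg_left (hyy x) (le_of_lt hμ2)
  have hνle : ∀ i, hNsym.eigenvalues i ≤ μ i1 := eigenvalue_le_of_quadform hNsym hNquad
  have hysum : ∑ c, Real.sqrt (qc c) • uc c = z := by
    rw [Finset.sum_congr rfl fun c _ => hucz c]
    exact hsum_zc
  set xs : EuclideanSpace ℝ (Fin k) := WithLp.toLp 2 (fun c => Real.sqrt (qc c) : Fin k → ℝ) with hxsdef
  have hxsc : ∀ c, (xs : Fin k → ℝ) c = Real.sqrt (qc c) := fun c => rfl
  clear_value xs
  clear hxsdef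
  have hxs1 : ⟪xs, xs⟫ = 1 := by
    rw [inner_eq_dot]
    calc (xs : Fin k → ℝ) ⬝ᵥ (xs : Fin k → ℝ)
        = ∑ c, qc c := by
          refine Finset.sum_congr rfl fun c _ => ?_
          rw [hxsc c]
          exact Real.mul_self_sqrt (hqcnn c)
      _ = 1 := hqcsum
  obtain ⟨jmin, hjmin⟩ := exists_eigen_le hNsym xs hxs1
  rw [inner_eq_dot] at hjmin
  have h2 : (xs : Fin k → ℝ) ⬝ᵥ (N *ᵥ (xs : Fin k → ℝ)) = z ⬝ᵥ (A *ᵥ z) := by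
    rw [← hyexp (xs : Fin k → ℝ)]
    have hxsum : ∑ c, (xs : Fin k → ℝ) c • uc c = z := by
      rw [show (fun c => (xs : Fin k → ℝ) c • uc c) = fun c => Real.sqrt (qc c) • uc c from
        funext fun c => by rw [hxsc]]
      exact hysum
    rw [hxsum]
  have hjminN : hNsym.eigenvalues jmin ≤ μ iN :=
    le_trans hjmin (le_of_eq (h2.trans hzAz))
  have htrN : ∑ i, hNsym.eigenvalues i = 0 := by
    rw [← trace_eq_sum_eig hNsym]
    have h1 : N.trace = ∑ c, N c c := rfl
    rw [h1]
    apply Finset.sum_eq_zero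
    intro c _
    rw [hNi]
    exact hucadj c
  have herase : ∑ i ∈ Finset.univ.erase jmin, hNsym.eigenvalues i ≤ ((k : ℝ) - 1) * μ i1 := by
    have hcard : (Finset.univ.erase jmin).card = k - 1 := by
      rw [Finset.card_erase_of_mem (Finset.mem_univ jmin), Finset.card_univ, Fintype.card_fin]
    have h1 := Finset.sum_le_card_nsmul (Finset.univ.erase jmin) hNsym.eigenvalues (μ i1)
      (fun i _ => hνle i)
    rw [hcard] at h1
    calc ∑ i ∈ Finset.univ.erase jmin, hNsym.eigenvalues i ≤ (k - 1 : ℕ) • μ i1 := h1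
      _ = ((k - 1 : ℕ) : ℝ) * μ i1 := nsmul_eq_mul _ _
      _ = ((k : ℝ) - 1) * μ i1 := by
          congr 1
          rw [Nat.cast_sub hk1]
          norm_num
  have hsplit := Finset.add_sum_erase Finset.univ hNsym.eigenvalues (Finset.mem_univ jmin)
  have hkey : 0 ≤ μ iN + ((k : ℝ) - 1) * μ i1 := by
    have h1 : hNsym.eigenvalues jmin + ∑ i ∈ Finset.univ.erase jmin, hNsym.eigenvalues i = 0 := by
      rw [hsplit, htrN]
    linarith
  have hdiv : |μ iN| / μ i1 ≤ (k : ℝ) - 1 := by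
    rw [abs_of_neg hμN, div_le_iff₀ hμ2]
    linarith
  have hmin : min (g : ℝ) (|μ iN| / μ i1) ≤ (k : ℝ) - 1 :=
    le_trans (min_le_right _ _) hdiv
  linarith
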